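/- arXiv:2003.13944 — 3 statements merged into one kernel-verified Lean document; each statement's English description precedes it below -/
import Mathlib

section
/- Let C₁, C₂ be linear codes in F_q^n. Define the second weight enumerator W^{[2]}_{C₁,C₂}(X,Y) = Σ_{c₁∈C₁, c₂∈C₂} X^{n-wt(c₁,c₂)} Y^{wt(c₁,c₂)}, where wt(c₁,c₂) is the number of coordinates in which c₁ and c₂ are not both zero. Then W^{[2]}_{C₁^⊥, C₂^⊥}(X,Y) = (1/(|C₁|·|C₂|)) · W^{[2]}_{C₁,C₂}(X+(q²-1)Y, X-Y). -/
/-!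
Fix a primitive additive character `ψ` of `F` with values in `ℂ`. Orthogonality of characters
gives `|C| · 1_{C^⊥}(y) = ∑_{c ∈ C} ψ (c ⬝ᵥ y)`, so `|C₁| |C₂|` times the left-hand side is the sum
over `C₁ × C₂` of the Fourier transform of `(y₁, y₂) ↦ ∏ᵢ w (y₁ i) (y₂ i)`, where
`w a b = X` if `a = b = 0` and `Y` otherwise. The transform factors over the coordinates, and the
one-coordinate transform `∑_{a,b} ψ (c₁ a + c₂ b) w a b` is `X + (q² - 1) Y` if `c₁ = c₂ = 0`
and `X - Y` otherwise.
-/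

lemma pow_card_sub_mul_pow_card_eq_prod {ι M : Type*} [Fintype ι] [CommMonoid M] (p : ι → Prop)
    [DecidablePred p] (X Y : M) :
    X ^ (Fintype.card ι - Nat.card {i | ¬ p i}) * Y ^ Nat.card {i | ¬ p i} =
      ∏ i, if p i then X else Y := by
  rw [Finset.prod_ite, Finset.prod_const, Finset.prod_const, Nat.card_eq_card_toFinset,
    Set.toFinset_ofPred, ← Finset.card_univ, ← Finset.card_filter_add_card_filter_not p,
    Nat.add_sub_cancel]

lemma AddChar.map_sum_eq_prod {ι A M : Type*} [AddCommMonoid A] [CommMonoid M] (ψ : AddChar A M)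
    (s : Finset ι) (f : ι → A) : ψ (∑ i ∈ s, f i) = ∏ i ∈ s, ψ (f i) :=
  map_prod ψ.toMonoidHom (fun i => Multiplicative.ofAdd (f i)) s

namespace AddChar

variable {F R ι : Type*} [Field F] [Fintype F] [DecidableEq F] [CommRing R] [IsDomain R]
  [Fintype ι] [DecidableEq ι] {ψ : AddChar F R}

lemma sum_submodule_dotProduct (hψ : ψ.IsPrimitive) (C : Submodule F (ι → F))
    [DecidablePred (· ∈ C)] (y : ι → F) :
    ∑ c : C, ψ ((c : ι → F) ⬝ᵥ y) = if ∀ x ∈ C, x ⬝ᵥ y = 0 then (Fintype.card C : R) else 0 := by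
  split_ifs with hy
  · simp [hy]
  push Not at hy
  obtain ⟨x, hxC, hxy⟩ := hy
  obtain ⟨t, ht⟩ := ne_one_iff.1 (hψ hxy)
  -- translating by `t • x` multiplies the sum by `ψ (x ⬝ᵥ y * t) ≠ 1`
  refine eq_zero_of_mul_eq_self_left ht ?_
  rw [Finset.mul_sum]
  refine Fintype.sum_equiv (Equiv.addRight ⟨t • x, C.smul_mem t hxC⟩) _ _ fun c => ?_
  simp [add_dotProduct, map_add_eq_mul, mul_comm]

lemma sum_sum_mul_ite_and (hψ : ψ.IsPrimitive) (a b : F) (X Y : R) :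
    ∑ s, ∑ t, ψ (a * s + b * t) * (if s = 0 ∧ t = 0 then X else Y) =
      if a = 0 ∧ b = 0 then X + ((Fintype.card F : R) ^ 2 - 1) * Y else X - Y := by
  have expand (s t : F) : ψ (a * s + b * t) * (if s = 0 ∧ t = 0 then X else Y) =
      Y * (ψ (s * a) * ψ (t * b)) + if s = 0 ∧ t = 0 then X - Y else 0 := by
    split_ifs with hst
    · simp [hst.1, hst.2]
    · rw [map_add_eq_mul, mul_comm a, mul_comm b]; ring
  calc _ = ∑ s, ∑ t, (Y * (ψ (s * a) * ψ (t * b)) + if s = 0 ∧ t = 0 then X - Y else 0) := by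
        simp_rw [expand]
    _ = Y * ((∑ s, ψ (s * a)) * ∑ t, ψ (t * b)) + (X - Y) := by
        simp_rw [Finset.sum_mul_sum, Finset.mul_sum, Finset.sum_add_distrib]
        simp [ite_and]
    _ = _ := by
        simp only [sum_mulShift _ hψ]
        split_ifs <;> simp_all
        ring

lemma card_mul_sum_dual (hψ : ψ.IsPrimitive) (C : Submodule F (ι → F)) [DecidablePred (· ∈ C)]
    (f : (ι → F) → R) :
    (Fintype.card C : R) * ∑ y with ∀ x ∈ C, x ⬝ᵥ y = 0, f y =
      ∑ c : C, ∑ y, ψ ((c : ι → F) ⬝ᵥ y) * f y := by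
  simp_rw [Finset.sum_comm (γ := C), ← Finset.sum_mul, sum_submodule_dotProduct hψ,
    ite_mul, zero_mul, Finset.sum_ite, Finset.sum_const_zero, add_zero, Finset.mul_sum]

lemma card_mul_card_mul_sum_dual_sum_dual (hψ : ψ.IsPrimitive) (C₁ C₂ : Submodule F (ι → F))
    [DecidablePred (· ∈ C₁)] [DecidablePred (· ∈ C₂)] (f : (ι → F) → (ι → F) → R) :
    (Fintype.card C₁ * Fintype.card C₂ : R) *
        ∑ y₁ with ∀ x ∈ C₁, x ⬝ᵥ y₁ = 0, ∑ y₂ with ∀ x ∈ C₂, x ⬝ᵥ y₂ = 0, f y₁ y₂ =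
      ∑ c₁ : C₁, ∑ c₂ : C₂, ∑ y₁, ∑ y₂,
        ψ ((c₁ : ι → F) ⬝ᵥ y₁ + (c₂ : ι → F) ⬝ᵥ y₂) * f y₁ y₂ := by
  rw [mul_right_comm, card_mul_sum_dual hψ, Finset.sum_mul]
  refine Finset.sum_congr rfl fun c₁ _ => ?_
  rw [Finset.sum_comm, Finset.sum_mul]
  refine Finset.sum_congr rfl fun y₁ _ => ?_
  rw [mul_assoc, mul_comm _ (Fintype.card C₂ : R), card_mul_sum_dual hψ, Finset.mul_sum]
  simp_rw [Finset.mul_sum, map_add_eq_mul, mul_assoc]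

lemma sum_sum_dotProduct_mul_prod (hψ : ψ.IsPrimitive) (c₁ c₂ : ι → F) (X Y : R) :
    ∑ y₁, ∑ y₂, ψ (c₁ ⬝ᵥ y₁ + c₂ ⬝ᵥ y₂) * ∏ i, (if y₁ i = 0 ∧ y₂ i = 0 then X else Y) =
      ∏ i, if c₁ i = 0 ∧ c₂ i = 0 then X + ((Fintype.card F : R) ^ 2 - 1) * Y else X - Y := by
  simp_rw [← sum_sum_mul_ite_and hψ,
    ← Fintype.sum_prod_type' (f := fun s t => ψ (_ * s + _ * t) * _)]
  rw [Fintype.prod_sum, ← Fintype.sum_prod_type']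
  refine Fintype.sum_equiv (Equiv.arrowProdEquivProdArrow _ _ _).symm _ _ fun y => ?_
  simp only [dotProduct, ← Finset.sum_add_distrib, map_sum_eq_prod, ← Finset.prod_mul_distrib,
    Equiv.arrowProdEquivProdArrow_symm_apply]

theorem card_mul_card_mul_sum_dual_prod_eq_sum_prod (hψ : ψ.IsPrimitive)
    (C₁ C₂ : Submodule F (ι → F)) [DecidablePred (· ∈ C₁)] [DecidablePred (· ∈ C₂)] (X Y : R) :
    (Fintype.card C₁ * Fintype.card C₂ : R) *
        ∑ y₁ with ∀ x ∈ C₁, x ⬝ᵥ y₁ = 0, ∑ y₂ with ∀ x ∈ C₂, x ⬝ᵥ y₂ = 0,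
          ∏ i, (if y₁ i = 0 ∧ y₂ i = 0 then X else Y) =
      ∑ c₁ : C₁, ∑ c₂ : C₂, ∏ i, if (c₁ : ι → F) i = 0 ∧ (c₂ : ι → F) i = 0
        then X + ((Fintype.card F : R) ^ 2 - 1) * Y else X - Y := by
  rw [card_mul_card_mul_sum_dual_sum_dual hψ]
  simp_rw [sum_sum_dotProduct_mul_prod hψ]

end AddChar

/-- **MacWilliams theorem for the second weight enumerator.**  For linear codes `C₁, C₂ ⊆ F_q^n`,
`W^{[2]}_{C₁^⊥,C₂^⊥}(X,Y) = (1/(|C₁|·|C₂|)) · W^{[2]}_{C₁,C₂}(X+(q²-1)Y, X-Y)`, where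
`W^{[2]}_{C₁,C₂}(X,Y) = Σ_{c₁∈C₁,c₂∈C₂} X^{n-wt(c₁,c₂)} Y^{wt(c₁,c₂)}` and `wt(c₁,c₂)` counts
the coordinates at which `c₁` and `c₂` are not both zero. -/
theorem macwilliams_identity_second (F : Type*) [Field F] [Fintype F] (q : ℕ)
    (hq : q = Fintype.card F) (n : ℕ) (C₁ C₂ : Submodule F (Fin n → F)) (X Y : ℚ) :
    (∑ᶠ y₁ ∈ {y : Fin n → F | ∀ x ∈ C₁, ∑ i, x i * y i = 0},
      ∑ᶠ y₂ ∈ {y : Fin n → F | ∀ x ∈ C₂, ∑ i, x i * y i = 0},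
        X ^ (n - Nat.card {i | y₁ i ≠ 0 ∨ y₂ i ≠ 0}) *
          Y ^ (Nat.card {i | y₁ i ≠ 0 ∨ y₂ i ≠ 0})) =
      (1 / ((Nat.card C₁ : ℚ) * (Nat.card C₂ : ℚ))) *
        ∑ᶠ c₁ ∈ (C₁ : Set (Fin n → F)), ∑ᶠ c₂ ∈ (C₂ : Set (Fin n → F)),
          (X + ((q : ℚ) ^ 2 - 1) * Y) ^ (n - Nat.card {i | c₁ i ≠ 0 ∨ c₂ i ≠ 0}) *
            (X - Y) ^ (Nat.card {i | c₁ i ≠ 0 ∨ c₂ i ≠ 0}) := by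
  classical
  subst hq
  have hcard : ((Nat.card C₁ : ℚ) * Nat.card C₂) ≠ 0 := by
    have := Nat.card_pos (α := C₁); have := Nat.card_pos (α := C₂); positivity
  have weight (y₁ y₂ : Fin n → F) (Z W : ℚ) :
      Z ^ (n - Nat.card {i | y₁ i ≠ 0 ∨ y₂ i ≠ 0}) * W ^ Nat.card {i | y₁ i ≠ 0 ∨ y₂ i ≠ 0} =
        ∏ i, if y₁ i = 0 ∧ y₂ i = 0 then Z else W := by
    have h := pow_card_sub_mul_pow_card_eq_prod (fun i => y₁ i = 0 ∧ y₂ i = 0) Z W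
    simp only [not_and_or, Fintype.card_fin] at h
    exact h
  simp only [finsum_mem_eq_toFinset_sum, Set.toFinset_ofPred, ← Finset.sum_set_coe, weight]
  rw [one_div_mul_eq_div, eq_div_iff hcard, mul_comm, Nat.card_eq_fintype_card,
    Nat.card_eq_fintype_card]
  apply Rat.cast_injective (α := ℂ)
  push_cast [apply_ite]
  exact AddChar.card_mul_card_mul_sum_dual_prod_eq_sum_prod
    (AddChar.FiniteField.primitiveChar_to_Complex_isPrimitive F) C₁ C₂ X Y
end

section
/- Let S be a set of 6 points of P²(F_q) lying on a smooth conic, or a set of 6 points lying on two F_q-rational lines with 3 points on each line and not including the intersection point of the lines. Then the space V_S of codewords of C_{2,2}^⊥ supported on S is 1-dimensional, and every nonzero element of V_S has weight exactly 6. -/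
/-!
Write `V_S` for the codewords of `C_{2,2}^⊥` supported on `S`. There are six quadratic monomials
and six points, and some nonzero conic passes through `S`, so the `6 × 6` matrix of monomials
evaluated at `S` is singular and `V_S ≠ 0`.

Conversely, for distinct `i, j ∈ S` the four points of `S \ {i, j}` split into two pairs whose
joining lines both miss `j`: any split works when no three points of `S` are collinear, and
in the two-lines case it suffices that no pair lies on the line through `j`. The union of those
two lines is a conic through `S \ {i, j}` but not through `j`, so a codeword of `V_S` vanishing
at `i` also vanishes at `j`. Hence every nonzero codeword has support exactly `S`, and `V_S` is
one-dimensional.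

An irreducible conic contains no three collinear points: a quadratic form vanishing at three
points of a line vanishes on the whole line (a plane of `F³`), hence agrees as a function with
the product of that plane's linear form and another one. Over the infinite field `F̄` this
identity of functions is an identity of polynomials, so the conic is reducible over `F̄`.
-/

open MvPolynomial

/-- The linear functional `y ↦ Σ_i a i * y i` on `ι → F`. -/
noncomputable def coordPairing {F : Type*} [Field F] {ι : Type*} [Fintype ι] (a : ι → F) :
    (ι → F) →ₗ[F] F :=
  ∑ i, a i • LinearMap.proj i

/-- The dual code `C_{2,d}^⊥` of the projective Reed–Muller code of degree-`d` plane curves. -/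
noncomputable def dualRMCode (F : Type*) [Field F] [Fintype F]
    [Fintype (Projectivization F (Fin 3 → F))] (d : ℕ) :
    Submodule F (Projectivization F (Fin 3 → F) → F) :=
  ⨅ f ∈ {f : MvPolynomial (Fin 3) F | f.IsHomogeneous d},
    LinearMap.ker (coordPairing fun p => eval p.rep f)

open Matrix
open scoped LinearAlgebra.Projectivization

namespace MvPolynomial
variable {σ R : Type*} [CommSemiring R]

noncomputable def quadMonomial : Sym2 σ → MvPolynomial σ R :=
  Sym2.lift ⟨fun i j => X i * X j, fun _ _ => mul_comm _ _⟩

theorem homogeneousSubmodule_two_eq_span_quadMonomial :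
    homogeneousSubmodule σ R 2 = Submodule.span R (Set.range quadMonomial) := by
  rw [← homogeneousSubmodule_one_pow, homogeneousSubmodule_one_eq_span_X, pow_two,
    Submodule.span_mul_span]
  congr 1
  ext f
  simp only [Set.mem_mul, Set.mem_range]
  constructor
  · rintro ⟨_, ⟨i, rfl⟩, _, ⟨j, rfl⟩, rfl⟩
    exact ⟨s(i, j), rfl⟩
  · rintro ⟨z, rfl⟩
    induction z using Sym2.ind with
    | _ i j => exact ⟨_, ⟨i, rfl⟩, _, ⟨j, rfl⟩, rfl⟩

noncomputable def linearForm [Fintype σ] (u : σ → R) : MvPolynomial σ R := ∑ i, C (u i) * X i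

variable [Fintype σ]

@[simp]
theorem eval_linearForm (u x : σ → R) : eval x (linearForm u) = u ⬝ᵥ x := by
  simp [linearForm, dotProduct]

theorem constantCoeff_linearForm (u : σ → R) : constantCoeff (linearForm u) = 0 := by
  simp [linearForm]

theorem not_isUnit_linearForm [Nontrivial R] (u : σ → R) : ¬ IsUnit (linearForm u) :=
  fun h => not_isUnit_zero (constantCoeff_linearForm u ▸ h.map constantCoeff)

theorem isHomogeneous_linearForm (u : σ → R) : (linearForm u).IsHomogeneous 1 :=
  IsHomogeneous.sum _ _ _ fun i _ => (isHomogeneous_X R i).C_mul (u i)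

theorem IsHomogeneous.exists_eq_linearForm {f : MvPolynomial σ R} (hf : f.IsHomogeneous 1) :
    ∃ u, f = linearForm u := by
  rw [← mem_homogeneousSubmodule, homogeneousSubmodule_one_eq_span_X,
    Submodule.mem_span_range_iff_exists_fun] at hf
  obtain ⟨u, rfl⟩ := hf
  exact ⟨u, by simp [linearForm, smul_eq_C_mul]⟩

theorem IsHomogeneous.exists_eval_eq_dotProduct_mulVec [DecidableEq σ] {f : MvPolynomial σ R}
    (hf : f.IsHomogeneous 2) : ∃ A : Matrix σ σ R, ∀ x, eval x f = x ⬝ᵥ A *ᵥ x := by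
  rw [← mem_homogeneousSubmodule, homogeneousSubmodule_two_eq_span_quadMonomial] at hf
  induction hf using Submodule.span_induction with
  | mem f hf =>
    obtain ⟨z, rfl⟩ := hf
    induction z using Sym2.ind with
    | _ i j =>
      exact ⟨single i j 1, fun x => by
        simp [quadMonomial, single_mulVec, dotProduct, Function.update_apply]⟩
  | zero => exact ⟨0, by simp⟩
  | add f g _ _ hf hg =>
    obtain ⟨A, hA⟩ := hf
    obtain ⟨B, hB⟩ := hg
    exact ⟨A + B, fun x => by simp [hA, hB, add_mulVec, dotProduct_add]⟩
  | smul r f _ hf =>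
    obtain ⟨A, hA⟩ := hf
    exact ⟨r • A, fun x => by simp [hA, smul_mulVec, dotProduct_smul]⟩

end MvPolynomial

section QuadraticForms
variable {σ K : Type*} [Fintype σ]

theorem smul_add_smul_dotProduct_mulVec [CommRing K] (A : Matrix σ σ K) (a b : σ → K) (s t : K) :
    (s • a + t • b) ⬝ᵥ A *ᵥ (s • a + t • b) =
      s ^ 2 * (a ⬝ᵥ A *ᵥ a) + s * t * (a ⬝ᵥ A *ᵥ b + b ⬝ᵥ A *ᵥ a) + t ^ 2 * (b ⬝ᵥ A *ᵥ b) := by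
  simp only [mulVec_add, mulVec_smul, dotProduct_add, add_dotProduct, dotProduct_smul,
    smul_dotProduct, smul_eq_mul]
  ring

variable [Field K]

theorem exists_dotProduct_mulVec_eq_mul {A : Matrix σ σ K} {n : σ → K} (hn : n ≠ 0)
    (h : ∀ y, n ⬝ᵥ y = 0 → y ⬝ᵥ A *ᵥ y = 0) :
    ∃ m, ∀ x, x ⬝ᵥ A *ᵥ x = (n ⬝ᵥ x) * (m ⬝ᵥ x) := by
  classical
  obtain ⟨k, hk⟩ := Function.ne_iff.mp hn
  set e : σ → K := Pi.single k (n k)⁻¹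
  have he : n ⬝ᵥ e = 1 := by simpa [e, dotProduct_single] using mul_inv_cancel₀ hk
  -- `x - (n ⬝ᵥ x) • e` lies on the hyperplane; expanding the form there gives the factor `m`.
  refine ⟨A *ᵥ e + e ᵥ* A - (e ⬝ᵥ A *ᵥ e) • n, fun x => ?_⟩
  have hy := h ((1 : K) • x + (-(n ⬝ᵥ x)) • e) (by simp [dotProduct_add, he])
  rw [smul_add_smul_dotProduct_mulVec] at hy
  simp only [sub_dotProduct, add_dotProduct, smul_dotProduct, smul_eq_mul, ← dotProduct_mulVec,
    dotProduct_comm (A *ᵥ e) x] at hy ⊢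
  linear_combination hy

end QuadraticForms

section PlaneGeometry
variable {F : Type*} [Field F]

theorem exists_smul_add_smul_eq_of_dotProduct_cross_eq_zero {a b c : Fin 3 → F}
    (hab : a ⨯₃ b ≠ 0) (h : c ⬝ᵥ a ⨯₃ b = 0) : ∃ s t : F, s • a + t • b = c := by
  have hli : LinearIndependent F ![a, b] := crossProduct_ne_zero_iff_linearIndependent.mp hab
  have hdep : ¬ LinearIndependent F ![c, a, b] := fun hli3 => by
    rw [triple_product_eq_det] at h
    exact (Matrix.isUnit_iff_isUnit_det _).mp
      (Matrix.linearIndependent_rows_iff_isUnit.mp hli3) |>.ne_zero h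
  have hc : c ∈ Submodule.span F (Set.range ![a, b]) := by
    by_contra hc
    exact hdep (linearIndependent_finCons.mpr ⟨hli, hc⟩)
  rwa [Matrix.range_cons, Matrix.range_cons, Matrix.range_empty, Set.union_empty,
    ← Set.insert_eq, Submodule.mem_span_pair] at hc

theorem RingHom.comp_crossProduct {R S : Type*} [CommRing R] [CommRing S] (φ : R →+* S)
    (a b : Fin 3 → R) : φ ∘ (a ⨯₃ b) = (φ ∘ a) ⨯₃ (φ ∘ b) := by
  ext i
  fin_cases i <;> simp [cross_apply]

theorem not_irreducible_of_eval_eq_zero_on_line {K : Type*} [Field K] [Infinite K]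
    {G : MvPolynomial (Fin 3) K} (hG : G.IsHomogeneous 2) {a b : Fin 3 → K} (hab : a ⨯₃ b ≠ 0)
    {s t : K} (hs : s ≠ 0) (ht : t ≠ 0) (ha : eval a G = 0) (hb : eval b G = 0)
    (hst : eval (s • a + t • b) G = 0) : ¬ Irreducible G := by
  obtain ⟨A, hA⟩ := hG.exists_eval_eq_dotProduct_mulVec
  rw [hA] at ha hb hst
  have hpolar : a ⬝ᵥ A *ᵥ b + b ⬝ᵥ A *ᵥ a = 0 := by
    rw [smul_add_smul_dotProduct_mulVec, ha, hb] at hst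
    simpa [hs, ht] using hst
  have hplane : ∀ y, (a ⨯₃ b) ⬝ᵥ y = 0 → y ⬝ᵥ A *ᵥ y = 0 := fun y hy => by
    rw [dotProduct_comm] at hy
    obtain ⟨s', t', rfl⟩ := exists_smul_add_smul_eq_of_dotProduct_cross_eq_zero hab hy
    rw [smul_add_smul_dotProduct_mulVec, ha, hb, hpolar]
    ring
  obtain ⟨m, hm⟩ := exists_dotProduct_mulVec_eq_mul hab hplane
  have hfactor : G = linearForm (a ⨯₃ b) * linearForm m :=
    MvPolynomial.funext fun x => by simp [hA, hm]
  intro hirr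
  rcases hirr.isUnit_or_isUnit hfactor with h | h <;> exact not_isUnit_linearForm _ h

end PlaneGeometry

namespace Projectivization
variable {F : Type*} [Field F]

theorem rep_cross_rep_ne_zero {p q : ℙ F (Fin 3 → F)} (h : p ≠ q) : p.rep ⨯₃ q.rep ≠ 0 :=
  fun h0 => h <| by
    rw [← mk_rep p, ← mk_rep q]
    exact (mk_eq_mk_iff_crossProduct_eq_zero _ _).mpr h0

theorem eq_of_rep_eq_smul_rep {p q : ℙ F (Fin 3 → F)} {s : F} (h : p.rep = s • q.rep) : p = q := by
  rw [← mk_rep p, ← mk_rep q, mk_eq_mk_iff']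
  exact ⟨s, h.symm⟩

theorem exists_smul_add_smul_eq_rep {p q r : ℙ F (Fin 3 → F)} (hpq : p ≠ q) (hrp : r ≠ p)
    (hrq : r ≠ q) (h : r.rep ⬝ᵥ p.rep ⨯₃ q.rep = 0) :
    ∃ s t : F, s ≠ 0 ∧ t ≠ 0 ∧ s • p.rep + t • q.rep = r.rep := by
  obtain ⟨s, t, hst⟩ := exists_smul_add_smul_eq_of_dotProduct_cross_eq_zero
    (rep_cross_rep_ne_zero hpq) h
  refine ⟨s, t, fun hs => hrq (eq_of_rep_eq_smul_rep (s := t) ?_),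
    fun ht => hrp (eq_of_rep_eq_smul_rep (s := s) ?_), hst⟩
  · simp [← hst, hs]
  · simp [← hst, ht]

end Projectivization

section Configurations
variable {F : Type*} [Field F]
open Projectivization Finset

theorem rep_dotProduct_cross_ne_zero_of_irreducible {K : Type*} [Field K] [Infinite K] [Algebra F K]
    {g : MvPolynomial (Fin 3) F} (hg : g.IsHomogeneous 2)
    (hirr : Irreducible (map (algebraMap F K) g)) {p q r : ℙ F (Fin 3 → F)} (hpq : p ≠ q)
    (hrp : r ≠ p) (hrq : r ≠ q) (hp : eval p.rep g = 0) (hq : eval q.rep g = 0)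
    (hr : eval r.rep g = 0) : r.rep ⬝ᵥ p.rep ⨯₃ q.rep ≠ 0 := by
  intro h
  obtain ⟨s, t, hs, ht, hst⟩ := exists_smul_add_smul_eq_rep hpq hrp hrq h
  set φ := algebraMap F K
  have hφ : ∀ v : Fin 3 → F, eval v g = 0 → eval (φ ∘ v) (map φ g) = 0 := fun v hv => by
    rw [← map_eval, hv, map_zero]
  have hcross : (φ ∘ p.rep) ⨯₃ (φ ∘ q.rep) ≠ 0 := by
    rw [← RingHom.comp_crossProduct]
    intro h0
    exact rep_cross_rep_ne_zero hpq (funext fun i => φ.injective (by simpa using congrFun h0 i))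
  have hline : φ s • (φ ∘ p.rep) + φ t • (φ ∘ q.rep) = φ ∘ r.rep := by
    ext i
    simp [← hst]
  exact not_irreducible_of_eval_eq_zero_on_line (hg.map φ) hcross ((map_ne_zero φ).mpr hs)
    ((map_ne_zero φ).mpr ht) (hφ _ hp) (hφ _ hq) (hline ▸ hφ _ hr) hirr

theorem rep_dotProduct_cross_ne_zero_of_lines {ℓ ℓ' : MvPolynomial (Fin 3) F}
    (hℓ : ℓ.IsHomogeneous 1) (hℓ' : ℓ'.IsHomogeneous 1) {t x y : ℙ F (Fin 3 → F)} (hxy : x ≠ y)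
    (htx : t ≠ x) (hty : t ≠ y) (ht : eval t.rep ℓ = 0) (ht' : eval t.rep ℓ' ≠ 0)
    (hx : eval x.rep ℓ ≠ 0) (hx' : eval x.rep ℓ' = 0)
    (hy : eval y.rep ℓ = 0 ∨ eval y.rep ℓ' = 0) : t.rep ⬝ᵥ x.rep ⨯₃ y.rep ≠ 0 := by
  intro h
  obtain ⟨s, u, hs, -, hsu⟩ := exists_smul_add_smul_eq_rep hxy htx hty h
  obtain ⟨a, rfl⟩ := hℓ.exists_eq_linearForm
  obtain ⟨b, rfl⟩ := hℓ'.exists_eq_linearForm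
  simp only [eval_linearForm, ← hsu, dotProduct_add, dotProduct_smul, smul_eq_mul] at *
  rcases hy with hy | hy <;> simp_all

def SeparatedByConic (R : Finset (ℙ F (Fin 3 → F))) (t : ℙ F (Fin 3 → F)) : Prop :=
  ∃ f : MvPolynomial (Fin 3) F, f.IsHomogeneous 2 ∧ eval t.rep f ≠ 0 ∧ ∀ p ∈ R, eval p.rep f = 0

theorem separatedByConic_of_pairing {t : ℙ F (Fin 3 → F)} {R A : Finset (ℙ F (Fin 3 → F))}
    (hR : #R = 4) (hAR : A ⊆ R) (hA : #A ≤ 2)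
    (hgood : ∀ x ∈ R, x ∉ A → ∀ y ∈ R, y ≠ x → t.rep ⬝ᵥ x.rep ⨯₃ y.rep ≠ 0) :
    SeparatedByConic R t := by
  classical
  -- Enlarge `A` to a pair `{x, z}`; the other two points `y, w` of `R` are off `A`, and the
  -- conic is the pair of lines `xy`, `zw`.
  obtain ⟨B, hAB, hBR, hB⟩ := exists_subsuperset_card_eq hAR hA (by omega)
  obtain ⟨x, z, -, rfl⟩ := card_eq_two.mp hB
  obtain ⟨y, w, -, hyw⟩ := card_eq_two.mp
    (show #(R \ {x, z}) = 2 by rw [card_sdiff_of_subset hBR, hR, hB])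
  have hy : y ∈ R \ {x, z} := hyw ▸ mem_insert_self y {w}
  have hw : w ∈ R \ {x, z} := hyw ▸ mem_insert_of_mem (mem_singleton_self w)
  rw [mem_sdiff] at hy hw
  refine ⟨linearForm (y.rep ⨯₃ x.rep) * linearForm (w.rep ⨯₃ z.rep),
    (isHomogeneous_linearForm _).mul (isHomogeneous_linearForm _), ?_, fun p hp => ?_⟩
  · have hyx := hgood y hy.1 (fun h => hy.2 (hAB h)) x (hBR (by simp)) (by rintro rfl; simp at hy)
    have hwz := hgood w hw.1 (fun h => hw.2 (hAB h)) z (hBR (by simp)) (by rintro rfl; simp at hw)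
    simpa [dotProduct_comm] using ⟨hyx, hwz⟩
  · have hp' : p ∈ ({x, z} : Finset _) ∨ p ∈ R \ {x, z} := by
      rw [mem_sdiff]; tauto
    rw [hyw] at hp'
    simp only [mem_insert, mem_singleton] at hp'
    have hleft (a b : Fin 3 → F) : a ⨯₃ b ⬝ᵥ a = 0 := by rw [dotProduct_comm, dot_self_cross]
    have hright (a b : Fin 3 → F) : a ⨯₃ b ⬝ᵥ b = 0 := by rw [dotProduct_comm, dot_cross_self]
    rcases hp' with (rfl | rfl) | rfl | rfl <;> simp [hleft, hright]

variable [DecidableEq (ℙ F (Fin 3 → F))]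

theorem separatedByConic_of_irreducible {K : Type*} [Field K] [Infinite K] [Algebra F K]
    {S : Finset (ℙ F (Fin 3 → F))} (hS : #S = 6) {g : MvPolynomial (Fin 3) F}
    (hg : g.IsHomogeneous 2) (hirr : Irreducible (map (algebraMap F K) g))
    (hgS : ∀ p ∈ S, eval p.rep g = 0) {i j : ℙ F (Fin 3 → F)} (hi : i ∈ S) (hj : j ∈ S)
    (hij : i ≠ j) : SeparatedByConic ((S.erase i).erase j) j := by
  refine separatedByConic_of_pairing (A := ∅) ?_ (empty_subset _) (by simp)
    fun x hx _ y hy hyx => ?_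
  · rw [card_erase_of_mem (mem_erase.mpr ⟨hij.symm, hj⟩), card_erase_of_mem hi, hS]
  · simp only [mem_erase] at hx hy
    exact rep_dotProduct_cross_ne_zero_of_irreducible hg hirr hyx.symm (Ne.symm hx.1)
      (Ne.symm hy.1) (hgS x hx.2.2) (hgS y hy.2.2) (hgS j hj)

theorem separatedByConic_of_lines [DecidableEq F] {S : Finset (ℙ F (Fin 3 → F))} (hS : #S = 6)
    {ℓ ℓ' : MvPolynomial (Fin 3) F} (hℓ : ℓ.IsHomogeneous 1) (hℓ' : ℓ'.IsHomogeneous 1)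
    (hcard : #{p ∈ S | eval p.rep ℓ = 0} = 3)
    (hor : ∀ p ∈ S, eval p.rep ℓ = 0 ∨ eval p.rep ℓ' = 0)
    (hnb : ∀ p ∈ S, ¬ (eval p.rep ℓ = 0 ∧ eval p.rep ℓ' = 0)) {i j : ℙ F (Fin 3 → F)}
    (hi : i ∈ S) (hj : j ∈ S) (hij : i ≠ j) (hjℓ : eval j.rep ℓ = 0) :
    SeparatedByConic ((S.erase i).erase j) j := by
  set R := (S.erase i).erase j
  refine separatedByConic_of_pairing (A := {p ∈ R | eval p.rep ℓ = 0}) ?_ (filter_subset _ _)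
    ?_ fun x hx hxA y hy hyx => ?_
  · rw [card_erase_of_mem (mem_erase.mpr ⟨hij.symm, hj⟩), card_erase_of_mem hi, hS]
  · have hsub : {p ∈ R | eval p.rep ℓ = 0} ⊆ {p ∈ S | eval p.rep ℓ = 0}.erase j :=
      fun p hp => by simp only [R, mem_filter, mem_erase] at hp ⊢; tauto
    calc #{p ∈ R | eval p.rep ℓ = 0} ≤ #({p ∈ S | eval p.rep ℓ = 0}.erase j) := card_le_card hsub
      _ = 2 := by rw [card_erase_of_mem (mem_filter.mpr ⟨hj, hjℓ⟩), hcard]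
  · simp only [R, mem_filter, mem_erase] at hx hxA hy
    exact rep_dotProduct_cross_ne_zero_of_lines hℓ hℓ' hyx.symm (Ne.symm hx.1) (Ne.symm hy.1)
      hjℓ (fun h => hnb j hj ⟨hjℓ, h⟩) (fun h => hxA ⟨hx, h⟩)
      ((hor x hx.2.2).resolve_left fun h => hxA ⟨hx, h⟩) (hor y hy.2.2)

end Configurations

section Codes
variable {ι F : Type*} [Field F] {U : Submodule F (ι → F)} {S : Finset ι}
open Finset

theorem support_eq_of_forall_apply_eq_zero (hsupp : ∀ w ∈ U, ∀ i ∉ S, w i = 0)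
    (hzero : ∀ w ∈ U, ∀ i ∈ S, w i = 0 → w = 0) {w : ι → F} (hw : w ∈ U) (hw0 : w ≠ 0) :
    {i | w i ≠ 0} = S := by
  ext i
  exact ⟨fun hi => by_contra fun hiS => hi (hsupp w hw i hiS),
    fun hi hwi => hw0 (hzero w hw i hi hwi)⟩

theorem finrank_eq_one_of_forall_apply_eq_zero (hsupp : ∀ w ∈ U, ∀ i ∉ S, w i = 0)
    (hzero : ∀ w ∈ U, ∀ i ∈ S, w i = 0 → w = 0) (hU : U ≠ ⊥) : Module.finrank F U = 1 := by
  obtain ⟨w₀, hw₀, hw₀0⟩ := (Submodule.ne_bot_iff U).mp hU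
  obtain ⟨i, hi⟩ := Function.ne_iff.mp hw₀0
  have hiS : i ∈ S := by_contra fun hiS => hi (hsupp w₀ hw₀ i hiS)
  refine (finrank_eq_one_iff_of_nonzero' ⟨w₀, hw₀⟩ (by simpa using hw₀0)).mpr fun w => ?_
  refine ⟨w.1 i / w₀ i, Subtype.ext (sub_eq_zero.mp ?_).symm⟩
  refine hzero _ (U.sub_mem w.2 (U.smul_mem _ hw₀)) i hiS ?_
  simp [div_mul_cancel₀ _ hi]

variable [Fintype ι]

theorem apply_eq_zero_of_sum_mul_eq_zero {e w : ι → F} {j : ι} (h : ∑ i, e i * w i = 0)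
    (hother : ∀ i ≠ j, e i * w i = 0) (hj : e j ≠ 0) : w j = 0 := by
  rw [Fintype.sum_eq_single j hother] at h
  exact (mul_eq_zero.mp h).resolve_left hj

theorem exists_ne_zero_supported_orthogonal {κ : Type*} [Fintype κ] [DecidableEq κ]
    (e : κ → ι → F) (hcard : Fintype.card κ = #S) {γ : κ → F} (hγ : γ ≠ 0)
    (hγe : ∀ i ∈ S, ∑ k, γ k * e k i = 0) :
    ∃ w : ι → F, w ≠ 0 ∧ (∀ i ∉ S, w i = 0) ∧ ∀ k, ∑ i, e k i * w i = 0 := by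
  classical
  let σ : S ≃ κ := Fintype.equivOfCardEq (by rw [hcard, Fintype.card_coe])
  let M : Matrix κ κ F := Matrix.of fun k l => e k (σ.symm l)
  have hM : M.det = 0 := Matrix.exists_vecMul_eq_zero_iff.mp
    ⟨γ, hγ, funext fun l => by simpa [M, Matrix.vecMul, dotProduct] using hγe _ (σ.symm l).2⟩
  obtain ⟨v, hv, hMv⟩ := Matrix.exists_mulVec_eq_zero_iff.mpr hM
  let w : ι → F := fun i => if h : i ∈ S then v (σ ⟨i, h⟩) else 0
  have hsum : ∀ k, ∑ i, e k i * w i = ∑ l, e k (σ.symm l) * v l := fun k => by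
    rw [← sum_subset (subset_univ S) (fun i _ hi => by simp [w, hi]), ← sum_coe_sort S,
      ← σ.symm.sum_comp]
    simp [w]
  refine ⟨w, fun hw => hv ?_, fun i hi => by simp [w, hi], fun k => ?_⟩
  · ext l
    simpa [w] using congrFun hw (σ.symm l)
  · rw [hsum]
    simpa [M, Matrix.mulVec, dotProduct] using congrFun hMv k

end Codes

section DualCode
variable (F : Type*) [Field F] [Fintype F] [Fintype (ℙ F (Fin 3 → F))]
open Finset

noncomputable def dualRMCodeOn (d : ℕ) (S : Finset (ℙ F (Fin 3 → F))) :
    Submodule F (ℙ F (Fin 3 → F) → F) :=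
  dualRMCode F d ⊓ ⨅ p ∈ (↑S : Set (ℙ F (Fin 3 → F)))ᶜ,
    LinearMap.ker (LinearMap.proj (R := F) (φ := fun _ => F) p)

variable {F} {d : ℕ} {S : Finset (ℙ F (Fin 3 → F))} {w : ℙ F (Fin 3 → F) → F}

theorem mem_dualRMCode_iff : w ∈ dualRMCode F d ↔
    ∀ f : MvPolynomial (Fin 3) F, f.IsHomogeneous d → ∑ p, eval p.rep f * w p = 0 := by
  simp [dualRMCode, coordPairing]

theorem mem_dualRMCodeOn_iff : w ∈ dualRMCodeOn F d S ↔ w ∈ dualRMCode F d ∧ ∀ p ∉ S, w p = 0 := by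
  simp [dualRMCodeOn]

theorem dualRMCodeOn_two_ne_bot (hS : #S = 6) {g : MvPolynomial (Fin 3) F}
    (hg : g.IsHomogeneous 2) (hg0 : g ≠ 0) (hgS : ∀ p ∈ S, eval p.rep g = 0) :
    dualRMCodeOn F 2 S ≠ ⊥ := by
  classical
  have hspan (f : MvPolynomial (Fin 3) F) (hf : f.IsHomogeneous 2) :
      ∃ c : Sym2 (Fin 3) → F, ∑ z, c z • quadMonomial z = f := by
    rwa [← mem_homogeneousSubmodule, homogeneousSubmodule_two_eq_span_quadMonomial,
      Submodule.mem_span_range_iff_exists_fun] at hf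
  obtain ⟨γ, hγ⟩ := hspan g hg
  have hγ0 : γ ≠ 0 := by
    rintro rfl
    exact hg0 (by simp [← hγ])
  obtain ⟨w, hw0, hwS, hw⟩ := exists_ne_zero_supported_orthogonal
    (fun z (p : ℙ F (Fin 3 → F)) => eval p.rep (quadMonomial z : MvPolynomial (Fin 3) F))
    (by rw [Sym2.card, hS]; rfl) hγ0 fun p hp => by simpa [← hγ] using hgS p hp
  refine (Submodule.ne_bot_iff _).mpr ⟨w, mem_dualRMCodeOn_iff.mpr ⟨?_, hwS⟩, hw0⟩
  refine mem_dualRMCode_iff.mpr fun f hf => ?_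
  obtain ⟨c, rfl⟩ := hspan f hf
  simp_rw [map_sum, smul_eval, Finset.sum_mul, mul_assoc]
  rw [Finset.sum_comm]
  simp [← Finset.mul_sum, hw]

theorem eq_zero_of_mem_dualRMCodeOn [DecidableEq (ℙ F (Fin 3 → F))]
    (hsep : ∀ i ∈ S, ∀ j ∈ S, i ≠ j → SeparatedByConic ((S.erase i).erase j) j)
    (hw : w ∈ dualRMCodeOn F 2 S) {i : ℙ F (Fin 3 → F)} (hi : i ∈ S) (hwi : w i = 0) :
    w = 0 := by
  obtain ⟨hw, hwS⟩ := mem_dualRMCodeOn_iff.mp hw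
  ext j
  by_cases hj : j ∈ S
  swap
  · exact hwS j hj
  obtain rfl | hij := eq_or_ne i j
  · exact hwi
  obtain ⟨f, hf, hfj, hfR⟩ := hsep i hi j hj hij
  refine apply_eq_zero_of_sum_mul_eq_zero (mem_dualRMCode_iff.mp hw f hf) (fun p hpj => ?_) hfj
  by_cases hp : p ∈ S
  · obtain rfl | hpi := eq_or_ne p i
    · rw [hwi, mul_zero]
    · rw [hfR p (mem_erase.mpr ⟨hpj, mem_erase.mpr ⟨hpi, hp⟩⟩), zero_mul]
  · rw [hwS p hp, mul_zero]

end DualCode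

/-- Let `S` be a set of `6` points of `P²(F_q)` lying on a smooth conic, or `6` points lying on
two `F_q`-rational lines with `3` points on each line and not including the intersection point of
the lines.  Then the space `V_S` of codewords of `C_{2,2}^⊥` supported on `S` is `1`-dimensional,
and every nonzero element of `V_S` has weight exactly `6`. -/
theorem dual_conic_codewords_on_six_points (F : Type*) [Field F] [Fintype F]
    [Fintype (Projectivization F (Fin 3 → F))]
    (S : Finset (Projectivization F (Fin 3 → F))) (hS6 : S.card = 6)
    (hconfig :
      (∃ g : MvPolynomial (Fin 3) F, g.IsHomogeneous 2 ∧
        Irreducible (MvPolynomial.map (algebraMap F (AlgebraicClosure F)) g) ∧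
        ∀ p ∈ S, eval p.rep g = 0) ∨
      (∃ ℓ₁ ℓ₂ : MvPolynomial (Fin 3) F, ℓ₁ ≠ 0 ∧ ℓ₂ ≠ 0 ∧
        ℓ₁.IsHomogeneous 1 ∧ ℓ₂.IsHomogeneous 1 ∧ (¬ ∃ a : F, ℓ₂ = C a * ℓ₁) ∧
        Nat.card {p : Projectivization F (Fin 3 → F) | p ∈ S ∧ eval p.rep ℓ₁ = 0} = 3 ∧
        Nat.card {p : Projectivization F (Fin 3 → F) | p ∈ S ∧ eval p.rep ℓ₂ = 0} = 3 ∧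
        (∀ p ∈ S, eval p.rep ℓ₁ = 0 ∨ eval p.rep ℓ₂ = 0) ∧
        ∀ p ∈ S, ¬ (eval p.rep ℓ₁ = 0 ∧ eval p.rep ℓ₂ = 0))) :
    Module.finrank F ↥(dualRMCode F 2 ⊓
        ⨅ p ∈ ((↑S : Set (Projectivization F (Fin 3 → F)))ᶜ),
          LinearMap.ker (LinearMap.proj (R := F) (φ := fun _ => F) p)) = 1 ∧
      ∀ c ∈ dualRMCode F 2 ⊓
          ⨅ p ∈ ((↑S : Set (Projectivization F (Fin 3 → F)))ᶜ),
            LinearMap.ker (LinearMap.proj (R := F) (φ := fun _ => F) p),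
        c ≠ 0 → Nat.card {p | c p ≠ 0} = 6 := by
  classical
  have hcard (ℓ : MvPolynomial (Fin 3) F) :
      Nat.card {p | p ∈ S ∧ eval p.rep ℓ = 0} = (S.filter fun p => eval p.rep ℓ = 0).card := by
    rw [← Finset.coe_filter, Nat.card_coe_set_eq, Set.ncard_coe_finset]
  obtain ⟨hsep, g, hg, hg0, hgS⟩ :
      (∀ i ∈ S, ∀ j ∈ S, i ≠ j → SeparatedByConic ((S.erase i).erase j) j) ∧
      ∃ g : MvPolynomial (Fin 3) F, g.IsHomogeneous 2 ∧ g ≠ 0 ∧ ∀ p ∈ S, eval p.rep g = 0 := by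
    rcases hconfig with ⟨g, hg, hirr, hgS⟩ | ⟨ℓ₁, ℓ₂, h₁0, h₂0, h₁, h₂, -, hc₁, hc₂, hor, hnb⟩
    · refine ⟨fun i hi j hj hij => separatedByConic_of_irreducible hS6 hg hirr hgS hi hj hij,
        g, hg, fun h => hirr.ne_zero (by simp [h]), hgS⟩
    · refine ⟨fun i hi j hj hij => ?_, ℓ₁ * ℓ₂, h₁.mul h₂, mul_ne_zero h₁0 h₂0, fun p hp => ?_⟩
      · rcases hor j hj with h | h
        · exact separatedByConic_of_lines hS6 h₁ h₂ (hcard ℓ₁ ▸ hc₁) hor hnb hi hj hij h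
        · exact separatedByConic_of_lines hS6 h₂ h₁ (hcard ℓ₂ ▸ hc₂)
            (fun p hp => (hor p hp).symm) (fun p hp h => hnb p hp h.symm) hi hj hij h
      · rcases hor p hp with h | h <;> simp [h]
  have hsupp (w) (hw : w ∈ dualRMCodeOn F 2 S) : ∀ p ∉ S, w p = 0 :=
    (mem_dualRMCodeOn_iff.mp hw).2
  have hzero (w) (hw : w ∈ dualRMCodeOn F 2 S) (i) (hi : i ∈ S) : w i = 0 → w = 0 :=
    eq_zero_of_mem_dualRMCodeOn hsep hw hi
  refine ⟨finrank_eq_one_of_forall_apply_eq_zero hsupp hzero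
    (dualRMCodeOn_two_ne_bot hS6 hg hg0 hgS), fun c hc hc0 => ?_⟩
  rw [support_eq_of_forall_apply_eq_zero hsupp hzero hc hc0, Nat.card_coe_set_eq,
    Set.ncard_coe_finset, hS6]
end

section
/- Write W^{[2]}_{C_{2,2}^⊥}(X,Y) = Σ_i B^{[2]}_i X^{q²+q+1-i} Y^i for the second weight enumerator of the dual conic code. Then B^{[2]}_0 = 1, B^{[2]}_1 = B^{[2]}_2 = B^{[2]}_3 = 0, and B^{[2]}_4 = (q²-1)(q²+q+1)·C(q+1,4). -/
/-!
A codeword `c` of `C_{2,d}^⊥` is orthogonal to the evaluation vector of every form of degree `d`,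
so `c p = 0` as soon as some degree-`d` form vanishes on `supp c \ {p}` but not at `p`. Products of
linear forms provide such forms. Through at most `d` points avoiding `p` they show that no nonzero
codeword has weight `≤ d + 1`. For a codeword of weight `d + 2`, the linear form of the line through
two support points times linear forms through the other support points shows that the support is
collinear.

Conversely, a quadric restricted to a line is a binary quadratic form, so four collinear points
impose at most three conditions and carry a nonzero codeword of `C_{2,2}^⊥`, unique up to a scalar
by the weight bound. Hence the pairs of joint weight `4` are the nonzero pairs in the `q`-element
space of codewords supported on a collinear `4`-set. By duality there are as many lines as points,
namely `q² + q + 1`, and each line has `q + 1` points.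
-/

open MvPolynomial

open Module Projectivization Function
open scoped LinearAlgebra.Projectivization

section ProjectiveGeometry

variable {K V : Type*} [Field K] [AddCommGroup V] [Module K V]

theorem Projectivization.rep_mem_span_rep_iff {p r : ℙ K V} : p.rep ∈ K ∙ r.rep ↔ p = r := by
  refine ⟨fun h => ?_, fun h => h ▸ Submodule.mem_span_singleton_self _⟩
  obtain ⟨a, ha⟩ := Submodule.mem_span_singleton.mp h
  rw [← mk_rep p, ← mk_rep r]
  exact (mk_eq_mk_iff' K _ _ _ _).mpr ⟨a, ha⟩

theorem Submodule.rep_mem_iff_mem_projectivization (W : Submodule K V) (p : ℙ K V) :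
    p.rep ∈ W ↔ p ∈ W.projectivization := by
  rw [← Submodule.mk_mem_projectivization_iff W p.rep_nonzero, mk_rep]

theorem Projectivization.finrank_span_rep_pair {a b : ℙ K V} (hab : a ≠ b) :
    finrank K (Submodule.span K {a.rep, b.rep}) = 2 := by
  rw [← Matrix.range_cons_cons_empty _ _ ![],
    finrank_span_eq_card (linearIndependent_pair_iff_ne.mpr hab)]
  rfl

theorem Projectivization.IsCollinear.subset_span_pair {S : Set (ℙ K V)} (hS : IsCollinear S)
    {a b : ℙ K V} (hab : a ≠ b) (ha : a ∈ S) (hb : b ∈ S) :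
    S ⊆ (Submodule.span K {a.rep, b.rep}).projectivization := by
  obtain ⟨M, _, hM, hSM⟩ := hS
  have hle : Submodule.span K {a.rep, b.rep} ≤ Subspace.submodule M := by
    rw [Submodule.span_le]
    rintro _ (rfl | rfl) <;> rw [SetLike.mem_coe, Subspace.mem_submodule_iff _ (rep_nonzero _),
      mk_rep] <;> exact hSM ‹_›
  rw [Submodule.eq_of_le_of_finrank_le hle (hM.trans (finrank_span_rep_pair hab).ge)]
  simpa using hSM

theorem Projectivization.isCollinear_iff_exists_finrank_eq_two {S : Set (ℙ K V)} {a b : ℙ K V}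
    (hab : a ≠ b) (ha : a ∈ S) (hb : b ∈ S) :
    IsCollinear S ↔ ∃ W : Submodule K V, finrank K W = 2 ∧ S ⊆ W.projectivization := by
  refine ⟨fun hS => ⟨_, finrank_span_rep_pair hab, hS.subset_span_pair hab ha hb⟩, ?_⟩
  rintro ⟨W, hW, hSW⟩
  have hWW : Subspace.submodule W.projectivization = W := Subspace.submodule.apply_symm_apply W
  refine ⟨W.projectivization, ?_, by rw [hWW, hW], hSW⟩
  rw [hWW]
  exact Module.finite_of_finrank_eq_succ hW

theorem Submodule.card_projectivization (W : Submodule K V) :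
    Nat.card W.projectivization = Nat.card (ℙ K W) := by
  have hmem : ∀ p : ℙ K W, Projectivization.map W.subtype W.injective_subtype p ∈
      W.projectivization := Projectivization.ind fun v hv => by simp [Projectivization.map_mk]
  refine (Nat.card_eq_of_bijective (fun p => ⟨_, hmem p⟩) ⟨fun p p' h =>
    Projectivization.map_injective _ W.injective_subtype (congrArg Subtype.val h), ?_⟩).symm
  rintro ⟨x, hx⟩
  induction x using Projectivization.ind with | h v hv =>
  exact ⟨Projectivization.mk K ⟨v, hx⟩ (by simpa [Subtype.ext_iff] using hv),
    Subtype.ext (Projectivization.map_mk _ W.injective_subtype _ _)⟩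

end ProjectiveGeometry

section FiniteGeometry

variable {K V : Type*} [Field K] [Fintype K] [AddCommGroup V] [Module K V]

theorem card_hyperplanes_eq_card_projectivization [FiniteDimensional K V] :
    Nat.card {W : Submodule K V // finrank K W + 1 = finrank K V} = Nat.card (ℙ K V) := by
  let e : {W : Submodule K V // finrank K W + 1 = finrank K V} ≃
      {H : Submodule K (Dual K V) // finrank K H = 1} :=
    { toFun := fun W => ⟨W.1.dualAnnihilator, by
        have := Subspace.finrank_add_finrank_dualAnnihilator_eq W.1; omega⟩
      invFun := fun H => ⟨H.1.dualCoannihilator, by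
        have := Subspace.finrank_add_finrank_dualCoannihilator_eq H.1; omega⟩
      left_inv := fun W => Subtype.ext (Subspace.dualAnnihilator_dualCoannihilator_eq)
      right_inv := fun H => Subtype.ext (Subspace.dualCoannihilator_dualAnnihilator_eq) }
  rw [Nat.card_congr (e.trans (equivSubmodule K (Dual K V)).symm),
    card_of_finrank K _ Subspace.dual_finrank_eq, card_of_finrank K V rfl]

theorem card_finsets_subset_projectivization [Finite V] {W : Submodule K V}
    (hW : finrank K W = 2) (k : ℕ) :
    Nat.card {T : Finset (ℙ K V) // T.card = k ∧ (T : Set (ℙ K V)) ⊆ W.projectivization} =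
      (Fintype.card K + 1).choose k := by
  classical
  have := Fintype.ofFinite (ℙ K V)
  have hpts : (Finset.univ.filter (· ∈ W.projectivization)).card = Fintype.card K + 1 := by
    rw [← Fintype.card_subtype, ← Nat.card_eq_fintype_card]
    exact (W.card_projectivization).trans
      ((card_of_finrank_two K W hW).trans (by rw [Nat.card_eq_fintype_card]))
  rw [← hpts, ← Finset.card_powersetCard, ← Nat.card_eq_finsetCard]
  refine Nat.card_congr (Equiv.subtypeEquivRight fun T => ?_)
  rw [Finset.mem_powersetCard, Finset.subset_iff, and_comm]
  simp [Set.subset_def]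

theorem card_collinear_finsets [Finite V] {k : ℕ} (hk : 2 ≤ k) :
    Nat.card {T : Finset (ℙ K V) // T.card = k ∧ IsCollinear (T : Set (ℙ K V))} =
      Nat.card {W : Submodule K V // finrank K W = 2} * (Fintype.card K + 1).choose k := by
  have : Fintype {W : Submodule K V // finrank K W = 2} := Fintype.ofFinite _
  have exists_ne : ∀ T : Finset (ℙ K V), T.card = k → ∃ a ∈ T, ∃ b ∈ T, a ≠ b := fun T hT =>
    Finset.one_lt_card.mp (by omega)
  let f : (Σ W : {W : Submodule K V // finrank K W = 2},
      {T : Finset (ℙ K V) // T.card = k ∧ (T : Set (ℙ K V)) ⊆ W.1.projectivization}) →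
      {T : Finset (ℙ K V) // T.card = k ∧ IsCollinear (T : Set (ℙ K V))} := fun x =>
    ⟨x.2.1, x.2.2.1, by
      obtain ⟨a, ha, b, hb, hab⟩ := exists_ne _ x.2.2.1
      exact (isCollinear_iff_exists_finrank_eq_two hab ha hb).mpr ⟨x.1.1, x.1.2, x.2.2.2⟩⟩
  have hf : Bijective f := by
    refine ⟨fun x y hxy => ?_, fun T => ?_⟩
    · have hT : x.2.1 = y.2.1 := congrArg Subtype.val hxy
      obtain ⟨a, ha, b, hb, hab⟩ := exists_ne _ x.2.2.1
      refine Sigma.subtype_ext (Subtype.ext (line_unique hab _ _ x.1.2 y.1.2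
        (x.2.2.2 ha) (x.2.2.2 hb) (y.2.2.2 (hT ▸ ha)) (y.2.2.2 (hT ▸ hb)))) hT
    · obtain ⟨a, ha, b, hb, hab⟩ := exists_ne _ T.2.1
      obtain ⟨W, hW, hTW⟩ := (isCollinear_iff_exists_finrank_eq_two hab ha hb).mp T.2.2
      exact ⟨⟨⟨W, hW⟩, ⟨T.1, T.2.1, hTW⟩⟩, rfl⟩
  rw [← Nat.card_eq_of_bijective f hf, Nat.card_sigma]
  simp_rw [fun W : {W : Submodule K V // finrank K W = 2} =>
    card_finsets_subset_projectivization W.2 k]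
  rw [Finset.sum_const, Finset.card_univ, smul_eq_mul, Nat.card_eq_fintype_card]

theorem card_projective_lines_fin_three :
    Nat.card {W : Submodule K (Fin 3 → K) // finrank K W = 2} =
      Fintype.card K ^ 2 + Fintype.card K + 1 := by
  have h := card_hyperplanes_eq_card_projectivization (K := K) (V := Fin 3 → K)
  rw [finrank_fin_fun, card_of_finrank K _ (finrank_fin_fun K)] at h
  simp only [Nat.reduceEqDiff] at h
  rw [h, Finset.sum_range_succ, Finset.sum_range_succ, Finset.sum_range_one,
    Nat.card_eq_fintype_card]
  ring

end FiniteGeometry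

namespace MvPolynomial

variable {K σ : Type*} [Field K]

theorem exists_isHomogeneous_one_separating [Fintype σ] {U : Submodule K (σ → K)} {v : σ → K}
    (hv : v ∉ U) :
    ∃ ℓ : MvPolynomial σ K, ℓ.IsHomogeneous 1 ∧ (∀ u ∈ U, eval u ℓ = 0) ∧ eval v ℓ ≠ 0 := by
  classical
  obtain ⟨φ, hφv, hφU⟩ := U.exists_dual_map_eq_bot_of_notMem hv inferInstance
  set ℓ : MvPolynomial σ K := ∑ i, C (φ fun j => if i = j then 1 else 0) * X i
  have heval : ∀ x, eval x ℓ = φ x := fun x => by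
    simp [ℓ, φ.pi_apply_eq_sum_univ x, mul_comm]
  refine ⟨ℓ, IsHomogeneous.sum _ _ _ fun i _ => ?_, fun u hu => ?_, by rwa [heval]⟩
  · simpa using (isHomogeneous_C σ _).mul (isHomogeneous_X K i)
  · rw [heval, ← Submodule.mem_bot K, ← hφU]
    exact Submodule.mem_map_of_mem hu

theorem exists_isHomogeneous_eval_rep_eq_zero [Fintype σ] {p : ℙ K (σ → K)}
    {S : Finset (ℙ K (σ → K))} (hp : p ∉ S) {d : ℕ} (hd : S.card ≤ d) :
    ∃ f : MvPolynomial σ K, f.IsHomogeneous d ∧ (∀ r ∈ S, eval r.rep f = 0) ∧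
      eval p.rep f ≠ 0 := by
  classical
  induction S using Finset.induction_on generalizing d with
  | empty =>
    obtain ⟨ℓ, hℓ, -, hℓp⟩ := exists_isHomogeneous_one_separating
      (U := ⊥) (Submodule.mem_bot K |>.not.mpr p.rep_nonzero)
    exact ⟨ℓ ^ d, by simpa using hℓ.pow d, by simp, by simpa using pow_ne_zero d hℓp⟩
  | insert r S hrS ih =>
    rw [Finset.card_insert_of_notMem hrS] at hd
    obtain ⟨d, rfl⟩ : ∃ e, d = e + 1 := ⟨d - 1, by omega⟩
    rw [Finset.mem_insert, not_or] at hp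
    obtain ⟨g, hg, hgS, hgp⟩ := ih (d := d) hp.2 (by omega)
    obtain ⟨ℓ, hℓ, hℓr, hℓp⟩ := exists_isHomogeneous_one_separating
      (rep_mem_span_rep_iff.not.mpr hp.1)
    refine ⟨ℓ * g, by simpa [add_comm] using hℓ.mul hg, fun r' hr' => ?_, by simp [hℓp, hgp]⟩
    rcases Finset.mem_insert.mp hr' with rfl | hr'
    · simp [hℓr _ (Submodule.mem_span_singleton_self _)]
    · simp [hgS r' hr']

theorem exists_eval_smul_add_smul_of_isHomogeneous_two {f : MvPolynomial σ K}
    (hf : f.IsHomogeneous 2) (u w : σ → K) :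
    ∃ A B C : K, ∀ a b : K, eval (a • u + b • w) f = A * a ^ 2 + B * (a * b) + C * b ^ 2 := by
  classical
  have hmon : ∀ d ∈ f.support, ∃ A B C : K, ∀ a b : K,
      (d.prod fun i e => (a • u + b • w) i ^ e) = A * a ^ 2 + B * (a * b) + C * b ^ 2 := by
    intro d hd
    have hcard : d.toMultiset.card = 2 := by
      have := hf (mem_support_iff.mp hd)
      simp only [Finsupp.weight_apply, Pi.one_apply, smul_eq_mul, mul_one] at this
      rw [Finsupp.card_toMultiset]
      exact this
    obtain ⟨i, j, hij⟩ := Multiset.card_eq_two.mp hcard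
    obtain rfl : d = Finsupp.single i 1 + Finsupp.single j 1 := by
      rw [Finsupp.toMultiset_eq_iff.mp hij, Multiset.insert_eq_cons, ← Multiset.singleton_add,
        Multiset.toFinsupp_add, Multiset.toFinsupp_singleton, Multiset.toFinsupp_singleton]
    refine ⟨u i * u j, u i * w j + w i * u j, w i * w j, fun a b => ?_⟩
    rw [Finsupp.prod_add_index' (fun _ => pow_zero _) (fun _ _ _ => pow_add _ _ _)]
    simp only [Finsupp.prod_single_index, pow_zero, pow_one, Pi.add_apply, Pi.smul_apply,
      smul_eq_mul]
    ring
  choose! A B C hABC using hmon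
  refine ⟨∑ d ∈ f.support, coeff d f * A d, ∑ d ∈ f.support, coeff d f * B d,
    ∑ d ∈ f.support, coeff d f * C d, fun a b => ?_⟩
  conv_lhs => rw [f.as_sum]
  simp only [map_sum, eval_monomial, Finset.sum_mul, ← Finset.sum_add_distrib]
  refine Finset.sum_congr rfl fun d hd => ?_
  rw [hABC d hd]
  ring

end MvPolynomial

theorem coordPairing_apply {F ι : Type*} [Field F] [Fintype ι] (a c : ι → F) :
    coordPairing a c = ∑ i, a i * c i := by
  simp [coordPairing]

namespace dualRMCode

variable {F : Type*} [Field F] [Fintype F] [Fintype (ℙ F (Fin 3 → F))] {d : ℕ}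
  {c x y : ℙ F (Fin 3 → F) → F}

local notation "ℙ²" => ℙ F (Fin 3 → F)

theorem _root_.mem_dualRMCode_iff_s12 : c ∈ dualRMCode F d ↔
    ∀ f : MvPolynomial (Fin 3) F, f.IsHomogeneous d → ∑ p, eval p.rep f * c p = 0 := by
  simp [dualRMCode, Submodule.mem_iInf, coordPairing_apply]

theorem apply_eq_zero_of_isHomogeneous (hc : c ∈ dualRMCode F d) {f : MvPolynomial (Fin 3) F}
    (hf : f.IsHomogeneous d) {p : ℙ²} (hvan : ∀ r ∈ support c, r ≠ p → eval r.rep f = 0)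
    (hp : eval p.rep f ≠ 0) : c p = 0 := by
  have hsum := mem_dualRMCode_iff_s12.mp hc f hf
  rw [Finset.sum_eq_single p (fun r _ hrp => ?_) (by simp)] at hsum
  · exact (mul_eq_zero.mp hsum).resolve_left hp
  · by_cases hr : c r = 0
    · rw [hr, mul_zero]
    · rw [hvan r hr hrp, zero_mul]

theorem eq_zero_of_ncard_support_le (hc : c ∈ dualRMCode F d) (h : (support c).ncard ≤ d + 1) :
    c = 0 := by
  classical
  funext p
  by_contra hp
  have hcard : ((support c).toFinset.erase p).card ≤ d := by
    rw [Finset.card_erase_of_mem (by simpa using hp), ← Set.ncard_eq_toFinset_card']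
    omega
  obtain ⟨f, hf, hfS, hfp⟩ :=
    exists_isHomogeneous_eval_rep_eq_zero (Finset.notMem_erase p _) hcard
  exact hp (apply_eq_zero_of_isHomogeneous hc hf
    (fun r hr hrp => hfS r (by simpa [hrp] using hr)) hfp)

theorem isCollinear_of_support_eq (hc : c ∈ dualRMCode F (d + 1)) {T : Finset ℙ²}
    (hT : T.card = d + 3) (hsupp : support c = T) : IsCollinear (T : Set ℙ²) := by
  classical
  obtain ⟨a, ha, b, hb, hab⟩ := Finset.one_lt_card.mp (by omega : 1 < T.card)
  set W := Submodule.span F {a.rep, b.rep}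
  refine (isCollinear_iff_exists_finrank_eq_two hab ha hb).mpr
    ⟨W, finrank_span_rep_pair hab, fun j hj => ?_⟩
  rw [SetLike.mem_coe, ← W.rep_mem_iff_mem_projectivization]
  by_contra hjW
  have hja : j ≠ a := by rintro rfl; exact hjW (Submodule.subset_span (by simp))
  have hjb : j ≠ b := by rintro rfl; exact hjW (Submodule.subset_span (by simp))
  set S := ((T.erase j).erase a).erase b
  have hS : S.card = d := by
    have ha' : a ∈ T.erase j := Finset.mem_erase.mpr ⟨hja.symm, ha⟩
    have hb' : b ∈ (T.erase j).erase a :=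
      Finset.mem_erase.mpr ⟨hab.symm, Finset.mem_erase.mpr ⟨hjb.symm, hb⟩⟩
    rw [Finset.card_erase_of_mem hb', Finset.card_erase_of_mem ha', Finset.card_erase_of_mem hj,
      hT]
    rfl
  obtain ⟨ℓ, hℓ, hℓW, hℓj⟩ := exists_isHomogeneous_one_separating hjW
  obtain ⟨g, hg, hgS, hgj⟩ := exists_isHomogeneous_eval_rep_eq_zero
    (show j ∉ S by simp [S]) hS.le
  have hcj : c j ≠ 0 := by
    change j ∈ support c
    rw [hsupp]
    exact hj
  refine hcj (apply_eq_zero_of_isHomogeneous hc (by simpa [add_comm] using hℓ.mul hg)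
    (fun r hr hrj => ?_) (by simp [hℓj, hgj]))
  rw [hsupp, Finset.mem_coe] at hr
  by_cases hrab : r = a ∨ r = b
  · have hrW : r.rep ∈ W := by
      rcases hrab with rfl | rfl <;> exact Submodule.subset_span (by simp)
    simp [hℓW _ hrW]
  · rw [not_or] at hrab
    simp [hgS r (by simp [S, hr, hrj, hrab.1, hrab.2])]

theorem exists_ne_zero_support_subset {T : Finset ℙ²} (hT : 3 < T.card)
    {u w : Fin 3 → F} (hTuw : ∀ p ∈ T, p.rep ∈ Submodule.span F {u, w}) :
    ∃ c ∈ dualRMCode F 2, c ≠ 0 ∧ support c ⊆ T := by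
  classical
  choose α β hαβ using fun p : T => Submodule.mem_span_pair.mp (hTuw p p.2)
  let L : (T → F) →ₗ[F] (Fin 3 → F) := LinearMap.pi ![coordPairing fun p => α p ^ 2,
    coordPairing fun p => α p * β p, coordPairing fun p => β p ^ 2]
  obtain ⟨x, hxL, hx0⟩ := (Submodule.ne_bot_iff _).mp
    (LinearMap.ker_ne_bot_of_finrank_lt (f := L) (by simpa using hT))
  have hx : ∀ i, L x i = 0 := fun i => by rw [LinearMap.mem_ker.mp hxL]; rfl
  have h0 : ∑ p, α p ^ 2 * x p = 0 := by simpa [L, coordPairing_apply] using hx 0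
  have h1 : ∑ p, α p * β p * x p = 0 := by simpa [L, coordPairing_apply] using hx 1
  have h2 : ∑ p, β p ^ 2 * x p = 0 := by simpa [L, coordPairing_apply] using hx 2
  refine ⟨fun p => if h : p ∈ T then x ⟨p, h⟩ else 0, mem_dualRMCode_iff_s12.mpr fun f hf => ?_, ?_, ?_⟩
  · obtain ⟨A, B, C, hABC⟩ := exists_eval_smul_add_smul_of_isHomogeneous_two hf u w
    calc ∑ p, eval p.rep f * (if h : p ∈ T then x ⟨p, h⟩ else 0)
        = ∑ p : T, eval p.1.rep f * x p := by
          rw [← Finset.sum_subset (Finset.subset_univ T) fun p _ hp => by simp [hp],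
            ← Finset.sum_coe_sort T]
          exact Finset.sum_congr rfl fun p _ => by simp [p.2]
      _ = A * ∑ p, α p ^ 2 * x p + B * ∑ p, α p * β p * x p + C * ∑ p, β p ^ 2 * x p := by
          simp only [Finset.mul_sum, ← Finset.sum_add_distrib, ← hαβ, hABC]
          exact Finset.sum_congr rfl fun p _ => by ring
      _ = 0 := by rw [h0, h1, h2]; ring
  · obtain ⟨p, hp⟩ := Function.ne_iff.mp hx0
    exact fun hc => hp (by simpa [p.2] using congrFun hc p.1)
  · intro p hp
    by_contra hpT
    exact hp (dif_neg hpT)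

variable (d) in
noncomputable def supportedCodewords (T : Finset ℙ²) :
    Submodule F (ℙ² → F) :=
  dualRMCode F d ⊓ Submodule.pi (T : Set ℙ²)ᶜ fun _ => ⊥

variable {T : Finset (ℙ F (Fin 3 → F))}

theorem mem_supportedCodewords :
    c ∈ supportedCodewords d T ↔ c ∈ dualRMCode F d ∧ support c ⊆ T := by
  simp only [supportedCodewords, Submodule.mem_inf, Submodule.mem_pi, Set.mem_compl_iff,
    Finset.mem_coe, Submodule.mem_bot, Function.support_subset_iff']

theorem support_eq_of_mem_supportedCodewords (hc : c ∈ supportedCodewords d T)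
    (hT : T.card = d + 2) (hc0 : c ≠ 0) : support c = T := by
  classical
  rw [mem_supportedCodewords] at hc
  refine hc.2.antisymm fun p hpT => ?_
  by_contra hp
  refine hc0 (eq_zero_of_ncard_support_le hc.1 ?_)
  calc (support c).ncard ≤ (↑(T.erase p) : Set ℙ²).ncard :=
        Set.ncard_le_ncard fun r hr => Finset.mem_erase.mpr ⟨fun h => hp (by rwa [← h]), hc.2 hr⟩
    _ = d + 1 := by rw [Set.ncard_coe_finset, Finset.card_erase_of_mem hpT, hT]; rfl

theorem exists_smul_eq_of_mem_supportedCodewords (hx : x ∈ supportedCodewords d T)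
    (hy : y ∈ supportedCodewords d T) (hT : T.card = d + 2) (hx0 : x ≠ 0) : ∃ t : F, t • x = y := by
  obtain ⟨p, hp⟩ := Function.ne_iff.mp hx0
  refine ⟨y p / x p, (sub_eq_zero.mp ?_).symm⟩
  by_contra hz
  have hpT : p ∈ (T : Set ℙ²) := (mem_supportedCodewords.mp hx).2 hp
  rw [← support_eq_of_mem_supportedCodewords (sub_mem hy (Submodule.smul_mem _ _ hx)) hT hz]
    at hpT
  simp [div_mul_cancel₀ _ hp] at hpT

theorem finrank_supportedCodewords (hT : T.card = 4) (hcol : IsCollinear (T : Set ℙ²)) :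
    finrank F (supportedCodewords 2 T) = 1 := by
  obtain ⟨a, ha, b, hb, hab⟩ := Finset.one_lt_card.mp (by omega : 1 < T.card)
  obtain ⟨c, hc, hc0, hcT⟩ := exists_ne_zero_support_subset (by omega) fun p hp =>
    (Submodule.rep_mem_iff_mem_projectivization _ p).mpr (hcol.subset_span_pair hab ha hb hp)
  have hc' : c ∈ supportedCodewords 2 T := mem_supportedCodewords.mpr ⟨hc, hcT⟩
  rw [finrank_eq_one_iff_of_nonzero' (⟨c, hc'⟩ : supportedCodewords 2 T)
    (by simpa [Subtype.ext_iff] using hc0)]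
  rintro ⟨y, hy⟩
  obtain ⟨t, ht⟩ := exists_smul_eq_of_mem_supportedCodewords hc' hy hT hc0
  exact ⟨t, Subtype.ext ht⟩

theorem jointSupport_eq_of_mem_supportedCodewords
    (hx : x ∈ supportedCodewords d T) (hy : y ∈ supportedCodewords d T) (hT : T.card = d + 2)
    (hxy : (x, y) ≠ 0) : support x ∪ support y = T := by
  rw [Ne, Prod.ext_iff, not_and_or] at hxy
  rcases hxy with hx0 | hy0
  · rw [support_eq_of_mem_supportedCodewords hx hT hx0]
    exact Set.union_eq_left.mpr (mem_supportedCodewords.mp hy).2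
  · rw [support_eq_of_mem_supportedCodewords hy hT hy0]
    exact Set.union_eq_right.mpr (mem_supportedCodewords.mp hx).2

theorem pair_weight_le_iff {i : ℕ} (hi : i ≤ d + 1) :
    (x ∈ dualRMCode F d ∧ y ∈ dualRMCode F d ∧ Nat.card ↥(support x ∪ support y) = i) ↔
      (x, y) = 0 ∧ i = 0 := by
  constructor
  · rintro ⟨hx, hy, hxy⟩
    rw [Nat.card_coe_set_eq] at hxy
    obtain rfl := eq_zero_of_ncard_support_le hx
      ((Set.ncard_le_ncard Set.subset_union_left).trans (hxy ▸ hi))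
    obtain rfl := eq_zero_of_ncard_support_le hy
      ((Set.ncard_le_ncard Set.subset_union_right).trans (hxy ▸ hi))
    simp [← hxy]
  · rintro ⟨hxy, rfl⟩
    obtain ⟨rfl, rfl⟩ := Prod.ext_iff.mp hxy
    simp

theorem pair_weight_four_iff :
    (x ∈ dualRMCode F 2 ∧ y ∈ dualRMCode F 2 ∧ Nat.card ↥(support x ∪ support y) = 4) ↔
      ∃ T : Finset ℙ², (T.card = 4 ∧ IsCollinear (T : Set ℙ²)) ∧
        (x ∈ supportedCodewords 2 T ∧ y ∈ supportedCodewords 2 T) ∧ (x, y) ≠ 0 := by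
  classical
  constructor
  · rintro ⟨hx, hy, hxy⟩
    set T := (support x ∪ support y).toFinset
    have hT : T.card = 4 := by rwa [← Set.ncard_eq_toFinset_card', ← Nat.card_coe_set_eq]
    have hxT : x ∈ supportedCodewords 2 T := mem_supportedCodewords.mpr
      ⟨hx, by simp [T, Set.subset_union_left]⟩
    have hyT : y ∈ supportedCodewords 2 T := mem_supportedCodewords.mpr
      ⟨hy, by simp [T, Set.subset_union_right]⟩
    have hxy0 : (x, y) ≠ 0 := by
      rintro h
      obtain ⟨rfl, rfl⟩ := Prod.ext_iff.mp h
      simp at hxy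
    refine ⟨T, ⟨hT, ?_⟩, ⟨hxT, hyT⟩, hxy0⟩
    rw [Ne, Prod.ext_iff, not_and_or] at hxy0
    rcases hxy0 with hx0 | hy0
    · exact isCollinear_of_support_eq (d := 1) hx hT
        (support_eq_of_mem_supportedCodewords hxT hT hx0)
    · exact isCollinear_of_support_eq (d := 1) hy hT
        (support_eq_of_mem_supportedCodewords hyT hT hy0)
  · rintro ⟨T, ⟨hT, -⟩, ⟨hxT, hyT⟩, hxy⟩
    refine ⟨(mem_supportedCodewords.mp hxT).1, (mem_supportedCodewords.mp hyT).1, ?_⟩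
    rw [jointSupport_eq_of_mem_supportedCodewords hxT hyT hT hxy, Nat.card_coe_set_eq,
      Set.ncard_coe_finset, hT]

theorem card_supportedCodewords (hT : T.card = 4) (hcol : IsCollinear (T : Set ℙ²)) :
    Nat.card (supportedCodewords 2 T) = Fintype.card F := by
  rw [Module.natCard_eq_pow_finrank (K := F), finrank_supportedCodewords hT hcol, pow_one,
    Nat.card_eq_fintype_card]

theorem card_pairs_weight_four :
    Nat.card {xy : (ℙ² → F) × (ℙ² → F) |
        xy.1 ∈ dualRMCode F 2 ∧ xy.2 ∈ dualRMCode F 2 ∧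
        Nat.card ↥(support xy.1 ∪ support xy.2) = 4} =
      (Fintype.card F ^ 2 - 1) *
        Nat.card {T : Finset ℙ² // T.card = 4 ∧ IsCollinear (T : Set ℙ²)} := by
  classical
  set Q := Finset.univ.filter fun T : Finset ℙ² => T.card = 4 ∧ IsCollinear (T : Set ℙ²)
  let P : Finset ℙ² → Finset ((ℙ² → F) × (ℙ² → F)) :=
    fun T => ((supportedCodewords 2 T : Set (ℙ² → F)).toFinset ×ˢ
      (supportedCodewords 2 T : Set (ℙ² → F)).toFinset).erase 0
  have hP : ∀ T xy, xy ∈ P T ↔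
      (xy.1 ∈ supportedCodewords 2 T ∧ xy.2 ∈ supportedCodewords 2 T) ∧ xy ≠ 0 := by
    simp [P, and_comm]
  have hunion : {xy : (ℙ² → F) × (ℙ² → F) |
      xy.1 ∈ dualRMCode F 2 ∧ xy.2 ∈ dualRMCode F 2 ∧
      Nat.card ↥(support xy.1 ∪ support xy.2) = 4}.toFinset = Q.biUnion P := by
    ext xy
    simp only [Set.mem_toFinset, Finset.mem_biUnion, Finset.mem_filter,
      Finset.mem_univ, true_and, Q, hP]
    exact pair_weight_four_iff
  have hdisj : (Q : Set (Finset ℙ²)).PairwiseDisjoint P := by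
    intro T hT T' hT' hne
    refine Finset.disjoint_left.mpr fun xy h h' => hne (Finset.coe_injective ?_)
    rw [hP] at h h'
    rw [← jointSupport_eq_of_mem_supportedCodewords h.1.1 h.1.2 (Finset.mem_filter.mp hT).2.1 h.2,
      ← jointSupport_eq_of_mem_supportedCodewords h'.1.1 h'.1.2 (Finset.mem_filter.mp hT').2.1 h'.2]
  have hcard : ∀ T ∈ Q, (P T).card = Fintype.card F ^ 2 - 1 := by
    intro T hT
    rw [Finset.mem_filter] at hT
    rw [Finset.card_erase_of_mem (by simp), Finset.card_product, Set.toFinset_card,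
      ← Nat.card_eq_fintype_card, SetLike.coe_sort_coe, card_supportedCodewords hT.2.1 hT.2.2, sq]
  rw [Nat.card_coe_set_eq, Set.ncard_eq_toFinset_card', hunion, Finset.card_biUnion hdisj,
    Finset.sum_congr rfl hcard, Finset.sum_const, smul_eq_mul, mul_comm, Nat.card_eq_fintype_card,
    Fintype.card_subtype]

end dualRMCode

/-- The low-weight coefficients of the second weight enumerator
`W^{[2]}_{C_{2,2}^⊥}(X,Y) = Σ_i B^{[2]}_i X^{q²+q+1-i} Y^i` of the dual conic code:
`B^{[2]}_0 = 1`, `B^{[2]}_1 = B^{[2]}_2 = B^{[2]}_3 = 0`, and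
`B^{[2]}_4 = (q²-1)(q²+q+1)·C(q+1,4)`.  Here `B^{[2]}_i` counts ordered pairs of dual codewords
that are not both zero at exactly `i` coordinates. -/
theorem dual_conic_code_second_enumerator_low_coeffs (F : Type*) [Field F] [Fintype F]
    [Fintype (Projectivization F (Fin 3 → F))] (q : ℕ) (hq : q = Fintype.card F) :
    Nat.card {cc : (Projectivization F (Fin 3 → F) → F) ×
        (Projectivization F (Fin 3 → F) → F) |
        cc.1 ∈ dualRMCode F 2 ∧ cc.2 ∈ dualRMCode F 2 ∧
        Nat.card {p | cc.1 p ≠ 0 ∨ cc.2 p ≠ 0} = 0} = 1 ∧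
    (∀ i, 1 ≤ i → i ≤ 3 →
      Nat.card {cc : (Projectivization F (Fin 3 → F) → F) ×
          (Projectivization F (Fin 3 → F) → F) |
          cc.1 ∈ dualRMCode F 2 ∧ cc.2 ∈ dualRMCode F 2 ∧
          Nat.card {p | cc.1 p ≠ 0 ∨ cc.2 p ≠ 0} = i} = 0) ∧
    Nat.card {cc : (Projectivization F (Fin 3 → F) → F) ×
        (Projectivization F (Fin 3 → F) → F) |
        cc.1 ∈ dualRMCode F 2 ∧ cc.2 ∈ dualRMCode F 2 ∧
        Nat.card {p | cc.1 p ≠ 0 ∨ cc.2 p ≠ 0} = 4} =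
      (q ^ 2 - 1) * (q ^ 2 + q + 1) * (q + 1).choose 4 := by
  subst hq
  refine ⟨?_, fun i hi1 hi3 => ?_, ?_⟩
  · have hzero : {cc : (ℙ F (Fin 3 → F) → F) × (ℙ F (Fin 3 → F) → F) |
        cc.1 ∈ dualRMCode F 2 ∧ cc.2 ∈ dualRMCode F 2 ∧
        Nat.card {p | cc.1 p ≠ 0 ∨ cc.2 p ≠ 0} = 0} = {0} :=
      Set.ext fun cc => (dualRMCode.pair_weight_le_iff (by omega)).trans (by simp)
    rw [hzero, Nat.card_unique]
  · have hempty : {cc : (ℙ F (Fin 3 → F) → F) × (ℙ F (Fin 3 → F) → F) |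
        cc.1 ∈ dualRMCode F 2 ∧ cc.2 ∈ dualRMCode F 2 ∧
        Nat.card {p | cc.1 p ≠ 0 ∨ cc.2 p ≠ 0} = i} = ∅ :=
      Set.ext fun cc => (dualRMCode.pair_weight_le_iff hi3).trans (by simp; omega)
    rw [hempty, Nat.card_of_isEmpty]
  · refine dualRMCode.card_pairs_weight_four.trans ?_
    rw [card_collinear_finsets (by norm_num), card_projective_lines_fin_three, mul_assoc]
end
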